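/- arXiv:1507.04074 — 5 statements merged into one kernel-verified Lean document; each statement's English description precedes it below -/
import Mathlib

section
/- Let f and g be convex nondecreasing functions on [0,∞) and let a > 0. Then the minimum of x + y over the region {(x,y) : x,y ≥ 0, f(x) + g(y) ≥ a} is attained at a point with x = 0 or y = 0; more precisely, it equals the minimum of min{z ≥ 0 : f(0) + g(z) ≥ a} and min{z ≥ 0 : f(z) + g(0) ≥ a} (assuming the constraint region is nonempty). -/
/-- Convexity bound: `f x + g y` is at most the max of the endpoint values. -/
lemma key_bound (f g : ℝ → ℝ)
    (hf : ConvexOn ℝ (Set.Ici 0) f) (hg : ConvexOn ℝ (Set.Ici 0) g)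
    (x y : ℝ) (hx : 0 ≤ x) (hy : 0 ≤ y) :
    f x + g y ≤ max (f 0 + g (x + y)) (f (x + y) + g 0) := by
  set s := x + y with hs
  rcases eq_or_lt_of_le (by linarith : (0:ℝ) ≤ s) with h0 | h0
  · have hx0 : x = 0 := by linarith
    have hy0 : y = 0 := by linarith
    have hs0 : s = 0 := h0.symm
    rw [hx0, hy0, hs0]
    exact le_max_left _ _
  · set t := x / s with ht
    have ht0 : 0 ≤ t := div_nonneg hx h0.le
    have ht1 : t ≤ 1 := (div_le_one h0).mpr (by linarith)
    have hts : t * s = x := by rw [ht]; exact div_mul_cancel₀ x h0.ne'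
    have h1 : f x ≤ (1 - t) * f 0 + t * f s := by
      have := hf.2 (Set.mem_Ici.mpr le_rfl) (Set.mem_Ici.mpr h0.le)
        (by linarith : (0:ℝ) ≤ 1 - t) ht0 (by ring)
      simpa [smul_eq_mul, hts] using this
    have h2 : g y ≤ t * g 0 + (1 - t) * g s := by
      have := hg.2 (Set.mem_Ici.mpr le_rfl) (Set.mem_Ici.mpr h0.le)
        ht0 (by linarith : (0:ℝ) ≤ 1 - t) (by ring)
      have hy' : (1 - t) * s = y := by
        have : t * s = x := hts
        nlinarith
      simpa [smul_eq_mul, hy'] using this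
    have hm1 : f 0 + g s ≤ max (f 0 + g s) (f s + g 0) := le_max_left _ _
    have hm2 : f s + g 0 ≤ max (f 0 + g s) (f s + g 0) := le_max_right _ _
    nlinarith [mul_nonneg ht0 (sub_nonneg.mpr hm2), mul_nonneg (by linarith : (0:ℝ) ≤ 1 - t) (sub_nonneg.mpr hm1)]

/-- Linear upper bound on a convex function just to the right of `m`. -/
lemma conv_bound (g : ℝ → ℝ) (hg : ConvexOn ℝ (Set.Ici 0) g)
    (m z : ℝ) (hm : 0 ≤ m) (hz : m ≤ z) (hz1 : z ≤ m + 1) :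
    g z ≤ g m + (z - m) * (g (m + 1) - g m) := by
  set t := z - m with ht
  have ht0 : 0 ≤ t := by linarith
  have ht1 : t ≤ 1 := by linarith
  have := hg.2 (Set.mem_Ici.mpr hm) (Set.mem_Ici.mpr (by linarith : (0:ℝ) ≤ m + 1))
    (by linarith : (0:ℝ) ≤ 1 - t) ht0 (by ring)
  have hzz : (1 - t) * m + t * (m + 1) = z := by ring
  have h := this
  rw [smul_eq_mul, smul_eq_mul, smul_eq_mul, smul_eq_mul, hzz] at h
  nlinarith

/-- Let `f, g` be convex nondecreasing functions on `[0,∞)` and `a > 0`,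
with the region `{(x,y) : x,y ≥ 0, f x + g y ≥ a}` nonempty. Then the infimum of `x + y`
over this region is attained at a point with `x = 0` or `y = 0`, and it equals the minimum
of `min {z ≥ 0 : f 0 + g z ≥ a}` and `min {z ≥ 0 : f z + g 0 ≥ a}` (expressed as the
infimum over the union of these two sets, to allow one of them to be empty). -/
theorem stmt0 (f g : ℝ → ℝ) (a : ℝ) (ha : 0 < a)
    (hf : ConvexOn ℝ (Set.Ici 0) f) (hf' : MonotoneOn f (Set.Ici 0))
    (hg : ConvexOn ℝ (Set.Ici 0) g) (hg' : MonotoneOn g (Set.Ici 0))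
    (hne : ∃ x y : ℝ, 0 ≤ x ∧ 0 ≤ y ∧ a ≤ f x + g y) :
    (∃ x y : ℝ, 0 ≤ x ∧ 0 ≤ y ∧ a ≤ f x + g y ∧ (x = 0 ∨ y = 0) ∧
      x + y = sInf {s : ℝ | ∃ x' y' : ℝ, 0 ≤ x' ∧ 0 ≤ y' ∧ a ≤ f x' + g y' ∧ s = x' + y'}) ∧
    sInf {s : ℝ | ∃ x' y' : ℝ, 0 ≤ x' ∧ 0 ≤ y' ∧ a ≤ f x' + g y' ∧ s = x' + y'}
      = sInf ({z : ℝ | 0 ≤ z ∧ a ≤ f 0 + g z} ∪ {z : ℝ | 0 ≤ z ∧ a ≤ f z + g 0}) := by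
  set S : Set ℝ := {s : ℝ | ∃ x' y' : ℝ, 0 ≤ x' ∧ 0 ≤ y' ∧ a ≤ f x' + g y' ∧ s = x' + y'} with hS
  set U : Set ℝ := ({z : ℝ | 0 ≤ z ∧ a ≤ f 0 + g z} ∪ {z : ℝ | 0 ≤ z ∧ a ≤ f z + g 0}) with hU
  -- S = U
  have hSU : S = U := by
    ext s
    constructor
    · rintro ⟨x, y, hx, hy, hxy, rfl⟩
      have hb := key_bound f g hf hg x y hx hy
      have : a ≤ max (f 0 + g (x + y)) (f (x + y) + g 0) := le_trans hxy hb
      rcases le_max_iff.mp this with h | h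
      · exact Or.inl ⟨by linarith, h⟩
      · exact Or.inr ⟨by linarith, h⟩
    · rintro (⟨hz, hza⟩ | ⟨hz, hza⟩)
      · exact ⟨0, s, le_rfl, hz, hza, (zero_add s).symm⟩
      · exact ⟨s, 0, hz, le_rfl, hza, (add_zero s).symm⟩
  -- U is nonempty and bounded below
  obtain ⟨x₀, y₀, hx₀, hy₀, hxy₀⟩ := hne
  have hSne : S.Nonempty := ⟨x₀ + y₀, x₀, y₀, hx₀, hy₀, hxy₀, rfl⟩
  have hUne : U.Nonempty := hSU ▸ hSne
  have hUbdd : BddBelow U := by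
    refine ⟨0, fun z hz => ?_⟩
    rcases hz with ⟨h, _⟩ | ⟨h, _⟩ <;> exact h
  set m := sInf U with hm
  have hm0 : 0 ≤ m := le_csInf hUne (fun z hz => by rcases hz with ⟨h, _⟩ | ⟨h, _⟩ <;> exact h)
  -- m ∈ U
  have hmU : m ∈ U := by
    by_contra hmem
    rw [hU, Set.mem_union] at hmem
    push_neg at hmem
    obtain ⟨h1, h2⟩ := hmem
    have h1' : f 0 + g m < a := by
      by_contra h; push_neg at h; exact (h1 ⟨hm0, h⟩)
    have h2' : f m + g 0 < a := by
      by_contra h; push_neg at h; exact (h2 ⟨hm0, h⟩)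
    set ε := min (a - (f 0 + g m)) (a - (f m + g 0)) with hε
    have hεpos : 0 < ε := lt_min (by linarith) (by linarith)
    set D := max (max (g (m + 1) - g m) (f (m + 1) - f m)) 0 with hD
    have hD0 : 0 ≤ D := le_max_right _ _
    set δ := min 1 (ε / (2 * (D + 1))) with hδ
    have hδpos : 0 < δ := lt_min one_pos (by positivity)
    obtain ⟨z, hzU, hzlt⟩ := Real.lt_sInf_add_pos hUne hδpos
    have hzm : m ≤ z := csInf_le hUbdd hzU
    have hz1 : z ≤ m + 1 := by
      have : δ ≤ 1 := min_le_left _ _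
      linarith
    have hbound : (z - m) * D < ε := by
      have h1 : z - m < δ := by linarith
      have h2 : δ ≤ ε / (2 * (D + 1)) := min_le_right _ _
      have h3 : (z - m) * D ≤ δ * D := by nlinarith
      have h4 : δ * D ≤ (ε / (2 * (D + 1))) * D := by nlinarith
      have h5 : (ε / (2 * (D + 1))) * D < ε := by
        rw [div_mul_eq_mul_div, div_lt_iff₀ (by positivity)]
        nlinarith
      linarith
    have hgz : g z ≤ g m + (z - m) * D := by
      have := conv_bound g hg m z hm0 hzm hz1
      have hle : g (m + 1) - g m ≤ D := le_trans (le_max_left _ _) (le_max_left _ _)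
      nlinarith [mul_nonneg (by linarith : (0:ℝ) ≤ z - m) (sub_nonneg.mpr hle)]
    have hfz : f z ≤ f m + (z - m) * D := by
      have := conv_bound f hf m z hm0 hzm hz1
      have hle : f (m + 1) - f m ≤ D := le_trans (le_max_right _ _) (le_max_left _ _)
      nlinarith [mul_nonneg (by linarith : (0:ℝ) ≤ z - m) (sub_nonneg.mpr hle)]
    have hε1 : ε ≤ a - (f 0 + g m) := min_le_left _ _
    have hε2 : ε ≤ a - (f m + g 0) := min_le_right _ _
    rcases hzU with ⟨_, hza⟩ | ⟨_, hza⟩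
    · linarith
    · linarith
  -- conclude
  have hinf : sInf S = sInf U := by rw [hSU]
  refine ⟨?_, hinf⟩
  rcases hmU with ⟨h0, hgm⟩ | ⟨h0, hfm⟩
  · exact ⟨0, m, le_rfl, h0, hgm, Or.inl rfl, by rw [zero_add, hinf]⟩
  · exact ⟨m, 0, h0, le_rfl, hfm, Or.inr rfl, by rw [add_zero, hinf]⟩
end

section
/- A graph F satisfies τ(F) = |E(F)|/Δ(F) (where τ is the vertex cover number and Δ the maximum degree, assumed ≥ 1) if and only if F is bipartite and admits a minimum vertex cover A that is one of its color classes such that every vertex of A has degree exactly Δ(F) in F. -/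
open scoped Classical

/-- `S` is a vertex cover of `G`: every edge has an endpoint in `S`. -/
def IsVertexCover {V : Type*} (G : SimpleGraph V) (S : Finset V) : Prop :=
  ∀ ⦃v w : V⦄, G.Adj v w → v ∈ S ∨ w ∈ S

/-- The vertex cover number `τ(G)`: the minimum size of a vertex cover. -/
noncomputable def vertexCoverNumber {V : Type*} [Fintype V] (G : SimpleGraph V) : ℕ :=
  sInf {n : ℕ | ∃ S : Finset V, IsVertexCover G S ∧ S.card = n}

/-- `s` is an independent set of `G`. -/
def IsIndepFinset {V : Type*} (G : SimpleGraph V) (s : Finset V) : Prop :=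
  ∀ ⦃v⦄, v ∈ s → ∀ ⦃w⦄, w ∈ s → ¬ G.Adj v w

section Aux
variable {V : Type*} [Fintype V] [DecidableEq V] (F : SimpleGraph V) [DecidableRel F.Adj]

lemma sum_deg_eq (A : Finset V) :
    ∑ v ∈ A, F.degree v = ∑ e ∈ F.edgeFinset, (A.filter (· ∈ e)).card := by
  have h : ∀ v, F.degree v = (F.edgeFinset.filter (fun e => v ∈ e)).card := by
    intro v
    rw [← F.card_incidenceFinset_eq_degree, F.incidenceFinset_eq_filter]
  simp only [h, Finset.card_filter]
  exact Finset.sum_comm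

lemma vcn_exists : ∃ S : Finset V, IsVertexCover F S ∧ S.card = vertexCoverNumber F := by
  have hne : {n : ℕ | ∃ S : Finset V, IsVertexCover F S ∧ S.card = n}.Nonempty :=
    ⟨(Finset.univ : Finset V).card, Finset.univ, fun v w _ => Or.inl (Finset.mem_univ v), rfl⟩
  exact Nat.sInf_mem hne

lemma vcn_le {S : Finset V} (hS : IsVertexCover F S) : vertexCoverNumber F ≤ S.card :=
  Nat.sInf_le ⟨S, hS, rfl⟩

end Aux


/-- A graph `F` with maximum degree `Δ ≥ 1` satisfies `τ(F) = |E(F)|/Δ`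
(equivalently `Δ · τ(F) = |E(F)|`, since always `Δ · τ(F) ≥ |E(F)|`) if and only if `F` is
bipartite, admitting a minimum vertex cover `A` which is one of the two color classes (i.e.,
both `A` and its complement are independent sets) such that every vertex of `A` has degree
exactly `Δ` in `F`. -/
theorem stmt1 {V : Type*} [Fintype V] [DecidableEq V] (F : SimpleGraph V)
    [DecidableRel F.Adj] (hΔ : 1 ≤ F.maxDegree) :
    F.maxDegree * vertexCoverNumber F = F.edgeFinset.card ↔
      ∃ A : Finset V, IsVertexCover F A ∧ A.card = vertexCoverNumber F ∧
        IsIndepFinset F A ∧ IsIndepFinset F Aᶜ ∧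
        ∀ v ∈ A, F.degree v = F.maxDegree := by
  constructor
  · intro h
    obtain ⟨A, hcov, hcard⟩ := vcn_exists F
    -- cover gives ≥1
    have hge : ∀ e ∈ F.edgeFinset, 1 ≤ (A.filter (· ∈ e)).card := by
      intro e he
      induction e with
      | h x y =>
        rw [SimpleGraph.mem_edgeFinset, SimpleGraph.mem_edgeSet] at he
        rcases hcov he with hx | hy
        · exact Finset.card_pos.2 ⟨x, Finset.mem_filter.2 ⟨hx, by simp⟩⟩
        · exact Finset.card_pos.2 ⟨y, Finset.mem_filter.2 ⟨hy, by simp⟩⟩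
    have hsum1 : F.edgeFinset.card ≤ ∑ e ∈ F.edgeFinset, (A.filter (· ∈ e)).card := by
      calc F.edgeFinset.card = ∑ e ∈ F.edgeFinset, 1 := by simp
        _ ≤ _ := Finset.sum_le_sum hge
    have hsum2 : ∑ v ∈ A, F.degree v ≤ F.maxDegree * A.card := by
      calc ∑ v ∈ A, F.degree v ≤ ∑ v ∈ A, F.maxDegree :=
            Finset.sum_le_sum (fun v _ => F.degree_le_maxDegree v)
        _ = F.maxDegree * A.card := by rw [Finset.sum_const, smul_eq_mul, mul_comm]
    rw [← hcard] at h
    have hdc := sum_deg_eq F A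
    have key1 : ∑ v ∈ A, F.degree v = F.maxDegree * A.card := by omega
    have key2 : ∑ e ∈ F.edgeFinset, (A.filter (· ∈ e)).card = F.edgeFinset.card := by omega
    -- each vertex of A has degree Δ
    have hdeg : ∀ v ∈ A, F.degree v = F.maxDegree := by
      by_contra hc
      push_neg at hc
      obtain ⟨v, hv, hne⟩ := hc
      have hlt : F.degree v < F.maxDegree := lt_of_le_of_ne (F.degree_le_maxDegree v) hne
      have : ∑ u ∈ A, F.degree u < ∑ u ∈ A, F.maxDegree :=
        Finset.sum_lt_sum (fun u _ => F.degree_le_maxDegree u) ⟨v, hv, hlt⟩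
      rw [Finset.sum_const, smul_eq_mul, mul_comm] at this
      omega
    -- filter card = 1 for every edge
    have hone : ∀ e ∈ F.edgeFinset, (A.filter (· ∈ e)).card = 1 := by
      by_contra hc
      push_neg at hc
      obtain ⟨e, he, hne⟩ := hc
      have hlt : 1 < (A.filter (· ∈ e)).card := lt_of_le_of_ne (hge e he) (Ne.symm hne)
      have : ∑ e ∈ F.edgeFinset, 1 < ∑ e ∈ F.edgeFinset, (A.filter (· ∈ e)).card :=
        Finset.sum_lt_sum hge ⟨e, he, hlt⟩
      simp only [Finset.sum_const, smul_eq_mul, mul_one] at this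
      omega
    have hindep : IsIndepFinset F A := by
      intro v hv w hw hadj
      have he : s(v,w) ∈ F.edgeFinset := by
        rw [SimpleGraph.mem_edgeFinset, SimpleGraph.mem_edgeSet]; exact hadj
      have h2 : ({v, w} : Finset V) ⊆ A.filter (· ∈ s(v,w)) := by
        intro u hu
        rcases Finset.mem_insert.1 hu with rfl | hu
        · exact Finset.mem_filter.2 ⟨hv, by simp⟩
        · rw [Finset.mem_singleton] at hu; subst hu
          exact Finset.mem_filter.2 ⟨hw, by simp⟩
      have := Finset.card_le_card h2
      rw [Finset.card_pair hadj.ne, hone _ he] at this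
      omega
    refine ⟨A, hcov, hcard, hindep, ?_, hdeg⟩
    intro v hv w hw hadj
    rcases hcov hadj with h | h
    · exact (Finset.mem_compl.1 hv) h
    · exact (Finset.mem_compl.1 hw) h
  · rintro ⟨A, hcov, hcard, hindep, _, hdeg⟩
    have hone : ∀ e ∈ F.edgeFinset, (A.filter (· ∈ e)).card = 1 := by
      intro e he
      induction e with
      | h x y =>
        rw [SimpleGraph.mem_edgeFinset, SimpleGraph.mem_edgeSet] at he
        have hnot : ¬ (x ∈ A ∧ y ∈ A) := fun ⟨hx, hy⟩ => hindep hx hy he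
        have : A.filter (· ∈ s(x,y)) = A.filter (fun u => u = x ∨ u = y) := by
          apply Finset.filter_congr; intro u _; simp [Sym2.mem_iff]
        rw [this]
        rcases hcov he with hx | hy
        · have : A.filter (fun u => u = x ∨ u = y) = {x} := by
            ext u
            simp only [Finset.mem_filter, Finset.mem_singleton]
            constructor
            · rintro ⟨hu, rfl | rfl⟩
              · rfl
              · exact absurd ⟨hx, hu⟩ hnot
            · rintro rfl; exact ⟨hx, Or.inl rfl⟩
          rw [this, Finset.card_singleton]
        · have : A.filter (fun u => u = x ∨ u = y) = {y} := by
            ext u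
            simp only [Finset.mem_filter, Finset.mem_singleton]
            constructor
            · rintro ⟨hu, rfl | rfl⟩
              · exact absurd ⟨hu, hy⟩ hnot
              · rfl
            · rintro rfl; exact ⟨hy, Or.inr rfl⟩
          rw [this, Finset.card_singleton]
    have hE : F.edgeFinset.card = ∑ v ∈ A, F.degree v := by
      rw [sum_deg_eq F A, Finset.sum_congr rfl hone, Finset.sum_const, smul_eq_mul, mul_one]
    rw [hE, Finset.sum_congr rfl hdeg, Finset.sum_const, smul_eq_mul, mul_comm, hcard]
end

section
/- If F is a connected irregular graph with maximum degree Δ ≥ 2 and vertex cover number τ(F) > |E(F)|/Δ, then the fractional matching number satisfies ν*(F) > |E(F)|/Δ. -/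
open scoped Classical

/-- `w` is a fractional matching of `G`: weights in `[0,1]` on the edges, with total weight
at most `1` at every vertex. -/
def IsFractionalMatching {V : Type*} [Fintype V] [DecidableEq V] (G : SimpleGraph V)
    [DecidableRel G.Adj] (w : Sym2 V → ℝ) : Prop :=
  (∀ e, 0 ≤ w e ∧ w e ≤ 1) ∧ (∀ e, e ∉ G.edgeSet → w e = 0) ∧
    ∀ v : V, ∑ e ∈ G.incidenceFinset v, w e ≤ 1

/-- The fractional matching number `ν*(G)`: the supremum of the total weight of a
fractional matching. -/
noncomputable def fracMatchingNumber {V : Type*} [Fintype V] [DecidableEq V]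
    (G : SimpleGraph V) [DecidableRel G.Adj] : ℝ :=
  sSup {s : ℝ | ∃ w : Sym2 V → ℝ, IsFractionalMatching G w ∧ s = ∑ e ∈ G.edgeFinset, w e}

/-! Pick a vertex `u` of degree `< Δ`.

If some vertex `v` of degree `< Δ` is reached from `u` by an odd walk, put weight `1/Δ` on every
edge and add `+ε, -ε, +ε, …` along the walk. At each inner vertex of the walk the two changes
cancel, the endpoints `u` and `v` (which have slack `1/Δ`) gain `ε` each, and the total weight
grows by `ε`; hence `ν* > |E|/Δ`.

Otherwise there is no odd closed walk at `u`, so in the connected graph `F` the set `B` of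
vertices reached from `u` by an odd walk is one side of a bipartition. Every vertex of `B` has
degree `Δ`, and `B` is a vertex cover, so `Δ τ ≤ Δ |B| = |E|`. -/

section FractionalMatching

variable {V : Type*} [Fintype V] [DecidableEq V] {G : SimpleGraph V} [DecidableRel G.Adj]

lemma isFractionalMatching_of_nonneg {w : Sym2 V → ℝ} (hnonneg : ∀ e, 0 ≤ w e)
    (hsupp : ∀ e, e ∉ G.edgeSet → w e = 0) (hvert : ∀ v, ∑ e ∈ G.incidenceFinset v, w e ≤ 1) :
    IsFractionalMatching G w := by
  refine ⟨fun e => ⟨hnonneg e, ?_⟩, hsupp, hvert⟩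
  by_cases he : e ∈ G.edgeSet
  · induction e using Sym2.ind with
    | _ a b =>
      have ha : s(a, b) ∈ G.incidenceFinset a :=
        (G.mem_incidenceFinset a _).2 ⟨he, Sym2.mem_mk_left a b⟩
      exact (Finset.single_le_sum (fun e _ => hnonneg e) ha).trans (hvert a)
  · simp [hsupp e he]

lemma IsFractionalMatching.sum_le_fracMatchingNumber {w : Sym2 V → ℝ}
    (hw : IsFractionalMatching G w) : ∑ e ∈ G.edgeFinset, w e ≤ fracMatchingNumber G := by
  refine le_csSup ⟨G.edgeFinset.card, ?_⟩ ⟨w, hw, rfl⟩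
  rintro _ ⟨w', hw', rfl⟩
  simpa using Finset.sum_le_sum fun e (_ : e ∈ G.edgeFinset) => (hw'.1 e).2

end FractionalMatching

namespace SimpleGraph

variable {V : Type*} {G : SimpleGraph V}

namespace Walk

variable [DecidableEq V]

noncomputable def altWeight : ∀ {a b : V}, G.Walk a b → ℝ → Sym2 V → ℝ
  | _, _, nil, _, _ => 0
  | a, _, cons (v := c) _ p, ε, e => (if e = s(a, c) then ε else 0) + p.altWeight (-ε) e

@[simp]
lemma altWeight_nil {a : V} (ε : ℝ) (e : Sym2 V) : (nil : G.Walk a a).altWeight ε e = 0 := rfl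

lemma altWeight_cons {a c b : V} (h : G.Adj a c) (p : G.Walk c b) (ε : ℝ) (e : Sym2 V) :
    (cons h p).altWeight ε e = (if e = s(a, c) then ε else 0) + p.altWeight (-ε) e := rfl

lemma altWeight_eq_zero_of_notMem_edgeSet {a b : V} (p : G.Walk a b) (ε : ℝ) {e : Sym2 V}
    (he : e ∉ G.edgeSet) : p.altWeight ε e = 0 := by
  induction p generalizing ε with
  | nil => rfl
  | @cons a c b h p ih =>
    have hne : e ≠ s(a, c) := by rintro rfl; exact he h
    rw [altWeight_cons, if_neg hne, ih, add_zero]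

lemma abs_altWeight_le {a b : V} (p : G.Walk a b) (ε : ℝ) (e : Sym2 V) :
    |p.altWeight ε e| ≤ p.length * |ε| := by
  induction p generalizing ε with
  | nil => simp
  | @cons a c b h p ih =>
    have hstep : |(if e = s(a, c) then ε else 0)| ≤ |ε| := by split_ifs <;> simp
    calc |(cons h p).altWeight ε e|
        ≤ |(if e = s(a, c) then ε else 0)| + |p.altWeight (-ε) e| := abs_add_le _ _
      _ ≤ |ε| + p.length * |ε| := by simpa only [abs_neg] using add_le_add hstep (ih (-ε))
      _ = (cons h p).length * |ε| := by rw [length_cons]; push_cast; ring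

variable [Fintype V] [DecidableRel G.Adj]

lemma two_mul_sum_edgeFinset_altWeight {a b : V} (p : G.Walk a b) (ε : ℝ) :
    2 * ∑ e ∈ G.edgeFinset, p.altWeight ε e = (1 - (-1) ^ p.length) * ε := by
  induction p generalizing ε with
  | nil => simp
  | @cons a c b h p ih =>
    have hac : s(a, c) ∈ G.edgeFinset := mem_edgeFinset.2 h
    simp only [altWeight_cons, Finset.sum_add_distrib, Finset.sum_ite_eq', if_pos hac, length_cons,
      pow_succ]
    linear_combination ih (-ε)

lemma sum_incidenceFinset_altWeight {a b : V} (p : G.Walk a b) (ε : ℝ) (x : V) :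
    ∑ e ∈ G.incidenceFinset x, p.altWeight ε e
      = (if x = a then ε else 0) - (if x = b then (-1) ^ p.length * ε else 0) := by
  induction p generalizing ε with
  | nil => split_ifs <;> simp
  | @cons a c b h p ih =>
    have hmem : s(a, c) ∈ G.incidenceFinset x ↔ x = a ∨ x = c := by
      rw [mem_incidenceFinset, mk'_mem_incidenceSet_iff, and_iff_right h]
    simp only [altWeight_cons, Finset.sum_add_distrib, Finset.sum_ite_eq', hmem, ih, length_cons,
      pow_succ]
    have hac := h.ne
    split_ifs <;> grind

end Walk

section Perturbation

variable [Fintype V] [DecidableRel G.Adj]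

lemma sum_incidenceFinset_indicator_edgeSet [DecidableEq V] (c : ℝ) (x : V) :
    ∑ e ∈ G.incidenceFinset x, G.edgeSet.indicator (fun _ => c) e = G.degree x * c := by
  rw [Finset.sum_congr rfl fun e he => Set.indicator_of_mem (G.incidenceSet_subset x
    ((G.mem_incidenceFinset x e).1 he)) _, Finset.sum_const, card_incidenceFinset_eq_degree,
    nsmul_eq_mul]

lemma sum_edgeFinset_indicator_edgeSet (c : ℝ) :
    ∑ e ∈ G.edgeFinset, G.edgeSet.indicator (fun _ => c) e = G.edgeFinset.card * c := by
  rw [Finset.sum_congr rfl fun e he => Set.indicator_of_mem (mem_edgeFinset.1 he) _,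
    Finset.sum_const, nsmul_eq_mul]

variable [DecidableEq V]

lemma isFractionalMatching_indicator_add_altWeight {u v : V} (hu : G.degree u < G.maxDegree)
    (hv : G.degree v < G.maxDegree) (p : G.Walk u v) (hp : Odd p.length) {ε : ℝ} (hε : 0 ≤ ε)
    (hε_len : p.length * ε ≤ (G.maxDegree : ℝ)⁻¹) (hε_two : 2 * ε ≤ (G.maxDegree : ℝ)⁻¹) :
    IsFractionalMatching G
      (fun e => G.edgeSet.indicator (fun _ => (G.maxDegree : ℝ)⁻¹) e + p.altWeight ε e) := by
  set c : ℝ := (G.maxDegree : ℝ)⁻¹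
  have hΔ : (0 : ℝ) < G.maxDegree := by exact_mod_cast (Nat.zero_le _).trans_lt hu
  have hc : (G.maxDegree : ℝ) * c = 1 := mul_inv_cancel₀ hΔ.ne'
  refine isFractionalMatching_of_nonneg (fun e => ?_) (fun e he => ?_) (fun x => ?_)
  · by_cases he : e ∈ G.edgeSet
    · have hlow := (abs_le.1 ((p.abs_altWeight_le ε e).trans_eq (by rw [abs_of_nonneg hε]))).1
      rw [Set.indicator_of_mem he]
      linarith
    · simp [he, p.altWeight_eq_zero_of_notMem_edgeSet ε he]
  · simp [he, p.altWeight_eq_zero_of_notMem_edgeSet ε he]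
  · have hsum : ∑ e ∈ G.incidenceFinset x, (G.edgeSet.indicator (fun _ => c) e + p.altWeight ε e)
        = G.degree x * c + ((if x = u then ε else 0) + (if x = v then ε else 0)) := by
      rw [Finset.sum_add_distrib, sum_incidenceFinset_indicator_edgeSet,
        p.sum_incidenceFinset_altWeight, hp.neg_one_pow]
      split_ifs <;> ring
    rw [hsum]
    by_cases hx : x = u ∨ x = v
    · have hdeg : (G.degree x : ℝ) + 1 ≤ G.maxDegree := by
        norm_cast
        rcases hx with rfl | rfl <;> assumption
      have hbump : (if x = u then ε else 0) + (if x = v then ε else 0) ≤ 2 * ε := by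
        split_ifs <;> linarith
      nlinarith
    · push Not at hx
      have hdeg : (G.degree x : ℝ) ≤ G.maxDegree := by exact_mod_cast G.degree_le_maxDegree x
      simp only [hx, if_false, add_zero]
      nlinarith

theorem div_maxDegree_lt_fracMatchingNumber {u v : V} (hu : G.degree u < G.maxDegree)
    (hv : G.degree v < G.maxDegree) (p : G.Walk u v) (hp : Odd p.length) :
    (G.edgeFinset.card : ℝ) / G.maxDegree < fracMatchingNumber G := by
  set c : ℝ := (G.maxDegree : ℝ)⁻¹
  have hc : 0 < c := inv_pos.2 (by exact_mod_cast (Nat.zero_le _).trans_lt hu)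
  set ε : ℝ := c / (2 * (p.length + 1))
  have hε : 0 < ε := by positivity
  have hε_len : p.length * ε ≤ c := by
    rw [mul_div, div_le_iff₀ (by positivity)]
    nlinarith
  have hε_two : 2 * ε ≤ c := by
    rw [mul_div, div_le_iff₀ (by positivity)]
    nlinarith
  have hw := isFractionalMatching_indicator_add_altWeight hu hv p hp hε.le hε_len hε_two
  have htotal := hw.sum_le_fracMatchingNumber
  rw [Finset.sum_add_distrib, sum_edgeFinset_indicator_edgeSet] at htotal
  have hperturb := p.two_mul_sum_edgeFinset_altWeight ε
  rw [hp.neg_one_pow] at hperturb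
  rw [div_eq_mul_inv]
  linarith

end Perturbation

def oddReach (G : SimpleGraph V) (u : V) : Set V := {x | ∃ p : G.Walk u x, Odd p.length}

lemma Preconnected.isBipartiteWith_oddReach (hG : G.Preconnected) {u : V}
    (hu : ∀ p : G.Walk u u, ¬Odd p.length) :
    G.IsBipartiteWith (G.oddReach u) (G.oddReach u)ᶜ := by
  refine ⟨disjoint_compl_right, fun a b hab => ?_⟩
  by_cases ha : a ∈ G.oddReach u
  · refine Or.inl ⟨ha, fun ⟨q, hq⟩ => ?_⟩
    obtain ⟨p, hp⟩ := ha
    refine hu (p.append (Walk.cons hab q.reverse)) ?_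
    rw [Walk.length_append, Walk.length_cons, Walk.length_reverse]
    exact hp.add_even (hq.add_one)
  · refine Or.inr ⟨ha, ?_⟩
    obtain ⟨p⟩ := hG u a
    exact ⟨p.concat hab, by
      rw [Walk.length_concat]; exact (Nat.not_odd_iff_even.1 fun hp => ha ⟨p, hp⟩).add_one⟩

section VertexCover

variable [Fintype V]

lemma vertexCoverNumber_le_card {s : Finset V} (hs : _root_.IsVertexCover G s) :
    vertexCoverNumber G ≤ s.card :=
  Nat.sInf_le ⟨s, hs, rfl⟩

variable [DecidableRel G.Adj]

lemma IsBipartiteWith.mul_vertexCoverNumber_le_card_edgeFinset {s t : Finset V}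
    (h : G.IsBipartiteWith s t) {d : ℕ} (hd : ∀ x ∈ s, d ≤ G.degree x) :
    d * vertexCoverNumber G ≤ G.edgeFinset.card :=
  calc d * vertexCoverNumber G
      ≤ d * s.card := Nat.mul_le_mul_left d
        (vertexCoverNumber_le_card fun _ _ hab => (h.mem_of_adj hab).imp And.left And.right)
    _ = ∑ _x ∈ s, d := by rw [Finset.sum_const, smul_eq_mul, mul_comm]
    _ ≤ ∑ x ∈ s, G.degree x := Finset.sum_le_sum hd
    _ = G.edgeFinset.card := isBipartiteWith_sum_degrees_eq_card_edges h

end VertexCover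

end SimpleGraph

theorem stmt2_general {V : Type*} [Fintype V] [DecidableEq V] (F : SimpleGraph V)
    [DecidableRel F.Adj] (hconn : F.Connected)
    (hirr : ∃ v : V, F.degree v ≠ F.maxDegree)
    (hτ : F.edgeFinset.card < F.maxDegree * vertexCoverNumber F) :
    (F.edgeFinset.card : ℝ) / F.maxDegree < fracMatchingNumber F := by
  obtain ⟨u, hu⟩ := hirr
  replace hu := (F.degree_le_maxDegree u).lt_of_ne hu
  by_cases h : ∃ v, F.degree v < F.maxDegree ∧ ∃ p : F.Walk u v, Odd p.length
  · obtain ⟨v, hv, p, hp⟩ := h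
    exact SimpleGraph.div_maxDegree_lt_fracMatchingNumber hu hv p hp
  · push Not at h
    have hbip : F.IsBipartiteWith ↑(F.oddReach u).toFinset ↑(F.oddReach u).toFinsetᶜ := by
      simpa using hconn.preconnected.isBipartiteWith_oddReach (h u hu)
    have hmax : ∀ x ∈ (F.oddReach u).toFinset, F.maxDegree ≤ F.degree x := fun x hx => by
      obtain ⟨p, hp⟩ := Set.mem_toFinset.1 hx
      exact not_lt.1 fun hlt => h x hlt p hp
    exact absurd hτ (not_lt.2 (hbip.mul_vertexCoverNumber_le_card_edgeFinset hmax))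

/-- If `F` is a connected irregular graph with maximum degree `Δ ≥ 2`
and vertex cover number `τ(F) > |E(F)|/Δ`, then `ν*(F) > |E(F)|/Δ`. -/
theorem stmt2 {V : Type*} [Fintype V] [DecidableEq V] (F : SimpleGraph V)
    [DecidableRel F.Adj] (hconn : F.Connected) (hΔ : 2 ≤ F.maxDegree)
    (hirr : ∃ v : V, F.degree v ≠ F.maxDegree)
    (hτ : F.edgeFinset.card < F.maxDegree * vertexCoverNumber F) :
    (F.edgeFinset.card : ℝ) / F.maxDegree < fracMatchingNumber F :=
  stmt2_general F hconn hirr hτ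
end

section
/- For every k ≥ 2, the independence polynomial of the k-cycle satisfies P_{C_k}(x) = 2^{1−k} Σ_{j=0}^{⌊k/2⌋} C(k, 2j) (1+4x)^j. -/
open scoped Classical
open Polynomial

/-- The independence polynomial of `G` restricted to independent sets contained in `A`
(so `indepPolyOn G Finset.univ` is the independence polynomial of `G`, and taking `A` to be
the set of vertices of maximum degree gives `P_{G*}`). -/
noncomputable def indepPolyOn {V : Type*} [Fintype V] (G : SimpleGraph V)
    (A : Finset V) : Polynomial ℝ :=
  ∑ s ∈ A.powerset.filter (fun s => IsIndepFinset G s), (X : Polynomial ℝ) ^ s.card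

/-- The independence polynomial `P_G(x) = Σ_k i_G(k) x^k`. -/
noncomputable def indepPoly {V : Type*} [Fintype V] (G : SimpleGraph V) : Polynomial ℝ :=
  indepPolyOn G Finset.univ

/-!
Splitting the independent sets inside `A ∪ {v}` according to whether they contain `v` gives
`P(A ∪ {v}) = P(A) + x P(A ∖ N[v])`. Peeling the vertices of a path off one at a time yields the
Fibonacci polynomials `F_{n+2} = F_{n+1} + x F_n`, and deleting one vertex of `C_k` leaves a path,
so `P_{C_k} = F_{k+1} + x F_{k-1}`; hence `u_k = 2^{k-1} P_{C_k}` satisfies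
`u_{k+2} = 2 u_{k+1} + 4x u_k`. Pascal's rule gives the same recurrence for
`E_k = Σ_j C(k,2j) (1+4x)^j`, and the two sequences agree for `k = 1, 2`.
-/

section IndependencePolynomial

variable {V : Type*} {G : SimpleGraph V}

lemma isIndepFinset_insert [DecidableEq V] {s : Finset V} {v : V} :
    IsIndepFinset G (insert v s) ↔ IsIndepFinset G s ∧ ∀ w ∈ s, ¬ G.Adj v w := by
  refine ⟨fun h => ⟨fun a ha b hb => h (Finset.mem_insert_of_mem ha) (Finset.mem_insert_of_mem hb),
    fun w hw => h (Finset.mem_insert_self v s) (Finset.mem_insert_of_mem hw)⟩, ?_⟩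
  rintro ⟨hs, hvs⟩ a ha b hb
  rcases Finset.mem_insert.1 ha with ha | ha <;> rcases Finset.mem_insert.1 hb with hb | hb
  · exact ha ▸ hb ▸ G.loopless.irrefl v
  · exact ha ▸ hvs b hb
  · exact hb ▸ fun hab => hvs a ha hab.symm
  · exact hs ha hb

variable [Fintype V]

lemma indepPolyOn_empty : indepPolyOn G ∅ = 1 := by
  rw [indepPolyOn, Finset.powerset_empty, Finset.filter_singleton,
    if_pos (show IsIndepFinset G ∅ from fun _ h => absurd h (Finset.notMem_empty _))]
  simp

lemma indepPolyOn_insert [DecidableEq V] [DecidableRel G.Adj] {A : Finset V} {v : V} (hv : v ∉ A) :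
    indepPolyOn G (insert v A) =
      indepPolyOn G A + X * indepPolyOn G (A.filter fun w => ¬ G.Adj v w) := by
  simp only [indepPolyOn, Finset.sum_filter, Finset.sum_powerset_insert hv, Finset.mul_sum]
  congr 1
  symm
  apply Finset.sum_subset_zero_on_sdiff (Finset.powerset_mono.2 (Finset.filter_subset _ _))
  · intro t ht
    simp only [Finset.mem_sdiff, Finset.mem_powerset, Finset.subset_iff, Finset.mem_filter,
      not_forall, not_and, not_not] at ht
    obtain ⟨htA, w, hwt, hvw⟩ := ht
    rw [if_neg fun h => (isIndepFinset_insert.1 h).2 w hwt (hvw (htA hwt))]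
  · intro t ht
    have htA : t ⊆ A := (Finset.mem_powerset.1 ht).trans (Finset.filter_subset _ _)
    have htv : ∀ w ∈ t, ¬ G.Adj v w := fun w hw =>
      (Finset.mem_filter.1 (Finset.mem_powerset.1 ht hw)).2
    have hvt : v ∉ t := fun h => hv (htA h)
    simp only [isIndepFinset_insert, and_iff_left htv, Finset.card_insert_of_notMem hvt, pow_succ']
    split_ifs <;> simp

end IndependencePolynomial

noncomputable def fibPoly : ℕ → ℝ[X]
  | 0 => 0
  | 1 => 1
  | n + 2 => fibPoly (n + 1) + X * fibPoly n

lemma fibPoly_add_two (n : ℕ) : fibPoly (n + 2) = fibPoly (n + 1) + X * fibPoly n := rfl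

section Cycle

open SimpleGraph

lemma cycleGraph_adj_of_val_lt {k : ℕ} {i j : Fin k} (hij : i.val < j.val) :
    (cycleGraph k).Adj i j ↔ j.val = i.val + 1 ∨ (i.val = 0 ∧ j.val + 1 = k) := by
  rw [cycleGraph_adj', Fin.coe_sub_iff_lt.2 hij, Fin.coe_sub_iff_le.2 hij.le]
  have := j.isLt
  omega

def arc (k a m : ℕ) : Finset (Fin k) :=
  Finset.univ.filter fun i => a ≤ i.val ∧ i.val < a + m

lemma mem_arc {k a m : ℕ} {i : Fin k} : i ∈ arc k a m ↔ a ≤ i.val ∧ i.val < a + m := by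
  simp [arc]

lemma arc_zero (k a : ℕ) : arc k a 0 = ∅ := by
  ext i
  simp [mem_arc]

lemma arc_succ {k a m : ℕ} (h : a + m < k) : arc k a (m + 1) = insert ⟨a + m, h⟩ (arc k a m) := by
  ext i
  simp only [Finset.mem_insert, mem_arc, Fin.ext_iff]
  omega

lemma mk_notMem_arc {k a m : ℕ} (h : a + m < k) : (⟨a + m, h⟩ : Fin k) ∉ arc k a m := by
  simp [mem_arc]

lemma arc_filter_not_adj {k a m : ℕ} (ha : 1 ≤ a) (h : a + (m + 1) < k) :
    (arc k a (m + 1)).filter (fun w => ¬ (cycleGraph k).Adj ⟨a + (m + 1), h⟩ w) = arc k a m := by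
  ext w
  simp only [Finset.mem_filter, mem_arc]
  by_cases hw : w.val < a + (m + 1)
  · rw [adj_comm, cycleGraph_adj_of_val_lt hw]
    dsimp only
    omega
  · simp only [hw, and_false, false_and, false_iff]
    omega

lemma indepPolyOn_cycleGraph_arc {k a m : ℕ} (ha : 1 ≤ a) (h : a + m ≤ k) :
    indepPolyOn (cycleGraph k) (arc k a m) = fibPoly (m + 2) := by
  induction m using Nat.twoStepInduction with
  | zero => simp [arc_zero, indepPolyOn_empty, fibPoly]
  | one =>
    rw [arc_succ (by omega), indepPolyOn_insert (mk_notMem_arc _), arc_zero, Finset.filter_empty,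
      indepPolyOn_empty]
    simp [fibPoly]
  | more m ih₀ ih₁ =>
    rw [arc_succ (by omega), indepPolyOn_insert (mk_notMem_arc _), arc_filter_not_adj ha (by omega),
      ih₀ (by omega), ih₁ (by omega), fibPoly_add_two (m + 2)]

lemma indepPoly_cycleGraph (n : ℕ) :
    indepPoly (cycleGraph (n + 2)) = fibPoly (n + 3) + X * fibPoly (n + 1) := by
  have huniv : (Finset.univ : Finset (Fin (n + 2))) = insert 0 (arc (n + 2) 1 (n + 1)) := by
    ext i
    simp only [Finset.mem_univ, Finset.mem_insert, mem_arc, Fin.ext_iff, Fin.val_zero, true_iff]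
    omega
  have h0 : (0 : Fin (n + 2)) ∉ arc (n + 2) 1 (n + 1) := by simp [mem_arc]
  have hfilter : (arc (n + 2) 1 (n + 1)).filter (fun w => ¬ (cycleGraph (n + 2)).Adj 0 w) =
      arc (n + 2) 2 (n - 1) := by
    ext w
    simp only [Finset.mem_filter, mem_arc]
    by_cases hw : 1 ≤ w.val
    · rw [cycleGraph_adj_of_val_lt (show (0 : Fin (n + 2)).val < w.val from hw), Fin.val_zero]
      omega
    · simp only [hw, false_and, false_iff]
      omega
  rw [indepPoly, huniv, indepPolyOn_insert h0, hfilter,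
    indepPolyOn_cycleGraph_arc le_rfl (by omega), indepPolyOn_cycleGraph_arc one_le_two (by omega)]
  -- for `n = 0` the arc `arc 2 2 (n - 1)` is empty, and `fibPoly 2 = fibPoly 1`
  cases n <;> simp [fibPoly]

end Cycle

section BinomialSums

variable {R : Type*} [CommRing R] (y : R)

lemma sum_range_choose_add_mul_pow {k N : ℕ} (r : ℕ) (hN : k / 2 + 1 ≤ N) :
    ∑ j ∈ Finset.range N, (k.choose (2 * j + r) : R) * y ^ j =
      ∑ j ∈ Finset.range (k / 2 + 1), (k.choose (2 * j + r) : R) * y ^ j :=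
  Finset.eventually_constant_sum (fun j hj => by
    rw [Nat.choose_eq_zero_of_lt (by omega), Nat.cast_zero, zero_mul]) hN

def evenBinomSum (k : ℕ) : R :=
  ∑ j ∈ Finset.range (k / 2 + 1), (k.choose (2 * j) : R) * y ^ j

def oddBinomSum (k : ℕ) : R :=
  ∑ j ∈ Finset.range (k / 2 + 1), (k.choose (2 * j + 1) : R) * y ^ j

lemma evenBinomSum_eq_sum_range {k N : ℕ} (hN : k / 2 + 1 ≤ N) :
    evenBinomSum y k = ∑ j ∈ Finset.range N, (k.choose (2 * j) : R) * y ^ j :=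
  (sum_range_choose_add_mul_pow y 0 hN).symm

lemma oddBinomSum_eq_sum_range {k N : ℕ} (hN : k / 2 + 1 ≤ N) :
    oddBinomSum y k = ∑ j ∈ Finset.range N, (k.choose (2 * j + 1) : R) * y ^ j :=
  (sum_range_choose_add_mul_pow y 1 hN).symm

lemma oddBinomSum_succ (k : ℕ) : oddBinomSum y (k + 1) = evenBinomSum y k + oddBinomSum y k := by
  rw [oddBinomSum_eq_sum_range y (N := k + 1) (by omega),
    evenBinomSum_eq_sum_range y (N := k + 1) (by omega),
    oddBinomSum_eq_sum_range y (N := k + 1) (by omega), ← Finset.sum_add_distrib]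
  refine Finset.sum_congr rfl fun j _ => ?_
  rw [Nat.choose_succ_succ', Nat.cast_add, add_mul]

lemma evenBinomSum_succ (k : ℕ) :
    evenBinomSum y (k + 1) = evenBinomSum y k + y * oddBinomSum y k := by
  have pascal : ∀ j, ((k + 1).choose (2 * (j + 1)) : R) * y ^ (j + 1) =
      y * ((k.choose (2 * j + 1) : R) * y ^ j) + (k.choose (2 * (j + 1)) : R) * y ^ (j + 1) := by
    intro j
    rw [show 2 * (j + 1) = 2 * j + 1 + 1 by ring, Nat.choose_succ_succ', Nat.cast_add]
    ring
  rw [evenBinomSum_eq_sum_range y (N := k + 2) (by omega),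
    evenBinomSum_eq_sum_range y (N := k + 2) (by omega),
    oddBinomSum_eq_sum_range y (N := k + 1) (by omega), Finset.sum_range_succ' _ (k + 1),
    Finset.sum_range_succ' _ (k + 1), Finset.sum_congr rfl fun j _ => pascal j,
    Finset.sum_add_distrib, ← Finset.mul_sum, Nat.choose_zero_right, Nat.choose_zero_right]
  ring

lemma evenBinomSum_add_two (k : ℕ) :
    evenBinomSum y (k + 2) = 2 * evenBinomSum y (k + 1) + (y - 1) * evenBinomSum y k := by
  rw [evenBinomSum_succ y (k + 1), oddBinomSum_succ, evenBinomSum_succ y k]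
  ring

end BinomialSums

lemma two_pow_mul_eval_fibPoly (x : ℝ) (n : ℕ) :
    2 ^ n * (fibPoly (n + 2) + X * fibPoly n).eval x = evenBinomSum (1 + 4 * x) (n + 1) := by
  induction n using Nat.twoStepInduction with
  | zero => simp [fibPoly, evenBinomSum]
  | one =>
    simp [fibPoly, evenBinomSum, Finset.sum_range_succ]
    ring
  | more n ih₀ ih₁ =>
    rw [evenBinomSum_add_two, ← ih₀, ← ih₁]
    simp only [fibPoly_add_two, eval_add, eval_mul, eval_X, pow_succ]
    ring

/-- For every `k ≥ 2`,
`P_{C_k}(x) = 2^{1-k} Σ_{j=0}^{⌊k/2⌋} C(k,2j) (1+4x)^j`. -/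
theorem stmt9 (k : ℕ) (hk : 2 ≤ k) (x : ℝ) :
    (indepPoly (SimpleGraph.cycleGraph k)).eval x
      = (2 : ℝ) ^ ((1 : ℤ) - (k : ℤ)) *
          ∑ j ∈ Finset.range (k / 2 + 1), (k.choose (2 * j) : ℝ) * (1 + 4 * x) ^ j := by
  obtain ⟨n, rfl⟩ : ∃ n, k = n + 2 := ⟨k - 2, by omega⟩
  change _ = _ * evenBinomSum (1 + 4 * x) (n + 2)
  have hexp : (1 : ℤ) - ((n + 2 : ℕ) : ℤ) = -((n + 1 : ℕ) : ℤ) := by push_cast; ring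
  rw [← two_pow_mul_eval_fibPoly x (n + 1), indepPoly_cycleGraph, hexp, zpow_neg, zpow_natCast,
    inv_mul_cancel_left₀ (by positivity)]
end

section
/- Let μ₁,…,μ_n be probability measures on spaces Ω₁,…,Ω_n and μ their product. Let A₁,…,A_m be nonempty subsets of {1,…,n}, and let p₁,…,p_m ∈ [1,∞] satisfy Σ_{i : A_i ∋ j} 1/p_i ≤ 1 for every j ∈ {1,…,n}. If f_i ∈ L^{p_i}(Ω_{A_i}, μ_{A_i}) for each i, where Ω_A = Π_{j∈A} Ω_j and μ_A = Π_{j∈A} μ_j, then ∫ Π_{i=1}^m |f_i| dμ ≤ Π_{i=1}^m (∫ |f_i|^{p_i} dμ_{A_i})^{1/p_i}. -/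
open MeasureTheory ENNReal

/-- Hölder's inequality with weights summing to at most 1, on a probability space. -/
lemma holder_subunit {α ι : Type*} [MeasurableSpace α] {μ : Measure α}
    [IsProbabilityMeasure μ] (s : Finset ι) {f : ι → α → ℝ≥0∞}
    (hf : ∀ i ∈ s, AEMeasurable (f i) μ) {w : ι → ℝ}
    (hw : ∀ i ∈ s, 0 ≤ w i) (hw1 : ∑ i ∈ s, w i ≤ 1) :
    ∫⁻ a, ∏ i ∈ s, f i a ^ w i ∂μ ≤ ∏ i ∈ s, (∫⁻ a, f i a ∂μ) ^ w i := by
  have h := ENNReal.lintegral_mul_prod_norm_pow_le s (g := fun _ => (1 : ℝ≥0∞))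
    aemeasurable_const hf (1 - ∑ i ∈ s, w i) (by ring) (by linarith) hw
  simpa using h

universe u

/-- Finner's inequality, without the nonemptiness assumption on the index sets. -/
theorem finner_aux : ∀ (n : ℕ) {m : ℕ} (Ω : Fin n → Type u)
    [inst : ∀ j, MeasurableSpace (Ω j)]
    (μ : ∀ j, Measure (Ω j)) [hprob : ∀ j, IsProbabilityMeasure (μ j)]
    (A : Fin m → Finset (Fin n))
    (p : Fin m → ℝ) (hp : ∀ i, 1 ≤ p i)
    (hsum : ∀ j : Fin n, ∑ i ∈ Finset.univ.filter (fun i => j ∈ A i), (p i)⁻¹ ≤ 1)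
    (f : Fin m → (∀ j, Ω j) → ℝ≥0∞) (hmeas : ∀ i, Measurable (f i))
    (hdep : ∀ i, ∀ x y : ∀ j, Ω j, (∀ j ∈ A i, x j = y j) → f i x = f i y),
    ∫⁻ x, ∏ i, f i x ∂(Measure.pi μ)
      ≤ ∏ i, (∫⁻ x, f i x ^ p i ∂(Measure.pi μ)) ^ (1 / p i) := by
  intro n
  induction n with
  | zero =>
    intro m Ω inst μ hprob A p hp hsum f hmeas hdep
    have hp0 : ∀ i, p i ≠ 0 := fun i => by have := hp i; linarith
    have hx : ∀ (g : (∀ j, Ω j) → ℝ≥0∞) (x : ∀ j, Ω j),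
        g x = g (fun j => j.elim0) := fun g x => by
      congr 1; funext j; exact j.elim0
    calc ∫⁻ x, ∏ i, f i x ∂(Measure.pi μ)
        = ∫⁻ _, ∏ i, f i (fun j => j.elim0) ∂(Measure.pi μ) := by
          congr 1; funext x
          exact Finset.prod_congr rfl fun i _ => hx (f i) x
      _ = ∏ i, f i (fun j => j.elim0) := by
          rw [lintegral_const, measure_univ, mul_one]
      _ = ∏ i, (∫⁻ x, f i x ^ p i ∂(Measure.pi μ)) ^ (1 / p i) := by
          refine Finset.prod_congr rfl fun i _ => ?_
          have : ∫⁻ x, f i x ^ p i ∂(Measure.pi μ)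
              = f i (fun j => j.elim0) ^ p i := by
            rw [show (fun x => f i x ^ p i) = fun _ => f i (fun j => j.elim0) ^ p i by
              funext x; rw [hx (f i) x], lintegral_const, measure_univ, mul_one]
          rw [this, ← ENNReal.rpow_mul, mul_one_div, div_self (hp0 i), ENNReal.rpow_one]
      _ ≤ ∏ i, (∫⁻ x, f i x ^ p i ∂(Measure.pi μ)) ^ (1 / p i) := le_rfl
  | succ n ih =>
    intro m Ω inst μ hprob A p hp hsum f hmeas hdep
    classical
    have hp0 : ∀ i, p i ≠ 0 := fun i => by have := hp i; linarith
    have hpinv : ∀ i, 0 ≤ (p i)⁻¹ := fun i => by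
      have := hp i; positivity
    set z : Fin (n + 1) := 0 with hz
    set e := MeasurableEquiv.piFinSuccAbove Ω z with he
    set Ω' : Fin n → Type u := fun j => Ω (z.succAbove j) with hΩ'
    set ν : ∀ j, Measure (Ω' j) := fun j => μ (z.succAbove j) with hν
    haveI : ∀ j, IsProbabilityMeasure (ν j) := fun j => hprob _
    -- the space Ω 0 is nonempty since it carries a probability measure
    have hne : Nonempty (Ω z) := by
      by_contra h
      rw [not_nonempty_iff] at h
      have h1 : (μ z) Set.univ = 1 := measure_univ
      rw [Set.univ_eq_empty_iff.mpr h, measure_empty] at h1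
      exact zero_ne_one h1
    obtain ⟨t₀⟩ := hne
    -- the measure-preserving equivalence
    have hmp := measurePreserving_piFinSuccAbove μ z
    have hesymm : ∀ (t : Ω z) (x : ∀ j, Ω' j),
        e.symm (t, x) = Fin.insertNth z t x := fun t x => rfl
    have hco0 : ∀ (t : Ω z) (x : ∀ j, Ω' j), e.symm (t, x) z = t := fun t x => by
      rw [hesymm]; exact Fin.insertNth_apply_same z t x
    have hcoS : ∀ (t : Ω z) (x : ∀ j, Ω' j) (k : Fin n),
        e.symm (t, x) (z.succAbove k) = x k := fun t x k => by
      rw [hesymm]; exact Fin.insertNth_apply_succAbove z t x k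
    -- the new index sets
    set B : Fin m → Finset (Fin n) :=
      fun i => (A i).preimage z.succAbove Fin.succAbove_right_injective.injOn with hBdef
    have hB : ∀ i k, k ∈ B i ↔ z.succAbove k ∈ A i := fun i k => Finset.mem_preimage
    -- dependence transferred
    have hdep' : ∀ i (t : Ω z) (x y : ∀ j, Ω' j), (∀ k ∈ B i, x k = y k) →
        f i (e.symm (t, x)) = f i (e.symm (t, y)) := by
      intro i t x y hxy
      refine hdep i _ _ fun j hj => ?_
      rcases eq_or_ne j z with rfl | hjz
      · rw [hco0, hco0]
      · obtain ⟨k, rfl⟩ := Fin.exists_succAbove_eq hjz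
        rw [hcoS, hcoS]
        exact hxy k ((hB i k).mpr hj)
    have hconst : ∀ i, z ∉ A i → ∀ (t : Ω z) (x : ∀ j, Ω' j),
        f i (e.symm (t, x)) = f i (e.symm (t₀, x)) := by
      intro i hi t x
      refine hdep i _ _ fun j hj => ?_
      have hjz : j ≠ z := fun h => hi (h ▸ hj)
      obtain ⟨k, rfl⟩ := Fin.exists_succAbove_eq hjz
      rw [hcoS, hcoS]
    -- measurability of compositions
    have hmeas' : ∀ i, Measurable (fun y : Ω z × ∀ j, Ω' j => f i (e.symm y)) :=
      fun i => (hmeas i).comp e.symm.measurable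
    -- the functions after integrating out coordinate 0
    set g : Fin m → (∀ j, Ω' j) → ℝ≥0∞ := fun i x =>
      if z ∈ A i then (∫⁻ t, f i (e.symm (t, x)) ^ p i ∂(μ z)) ^ (1 / p i)
      else f i (e.symm (t₀, x)) with hgdef
    have hmeasg : ∀ i, Measurable (g i) := by
      intro i
      simp only [hgdef]
      split_ifs with h
      · exact (Measurable.lintegral_prod_left' ((hmeas' i).pow_const (p i))).pow_const _
      · exact (hmeas i).comp (e.symm.measurable.comp (measurable_const.prodMk measurable_id))
    have hdepg : ∀ i, ∀ x y : ∀ j, Ω' j, (∀ k ∈ B i, x k = y k) → g i x = g i y := by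
      intro i x y hxy
      simp only [hgdef]
      split_ifs with h
      · congr 1
        refine lintegral_congr fun t => ?_
        rw [hdep' i t x y hxy]
      · exact hdep' i t₀ x y hxy
    -- the transferred exponent condition
    have hsum' : ∀ k : Fin n,
        ∑ i ∈ Finset.univ.filter (fun i => k ∈ B i), (p i)⁻¹ ≤ 1 := by
      intro k
      have : Finset.univ.filter (fun i => k ∈ B i)
          = Finset.univ.filter (fun i => z.succAbove k ∈ A i) := by
        refine Finset.filter_congr fun i _ => ?_
        simp [hB]
      rw [this]
      exact hsum (z.succAbove k)
    -- integrals of g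
    have hint : ∀ i, ∫⁻ x, g i x ^ p i ∂(Measure.pi ν)
        = ∫⁻ x, f i x ^ p i ∂(Measure.pi μ) := by
      intro i
      have h1 : ∫⁻ x, f i x ^ p i ∂(Measure.pi μ)
          = ∫⁻ y, f i (e.symm y) ^ p i ∂((μ z).prod (Measure.pi ν)) :=
        ((hmp.symm e).lintegral_comp ((hmeas i).pow_const (p i))).symm
      have h2 : ∫⁻ y, f i (e.symm y) ^ p i ∂((μ z).prod (Measure.pi ν))
          = ∫⁻ x, ∫⁻ t, f i (e.symm (t, x)) ^ p i ∂(μ z) ∂(Measure.pi ν) :=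
        lintegral_prod_symm _ ((hmeas' i).pow_const (p i)).aemeasurable
      rw [h1, h2]
      refine lintegral_congr fun x => ?_
      simp only [hgdef]
      split_ifs with h
      · rw [← ENNReal.rpow_mul, one_div, inv_mul_cancel₀ (hp0 i), ENNReal.rpow_one]
      · have : ∀ t, f i (e.symm (t, x)) ^ p i = f i (e.symm (t₀, x)) ^ p i := fun t => by
          rw [hconst i h t x]
        simp_rw [this]
        rw [lintegral_const, measure_univ, mul_one]
    -- the pointwise Hölder estimate for the inner integral
    have hholder : ∀ x : ∀ j, Ω' j,
        ∫⁻ t, ∏ i, f i (e.symm (t, x)) ∂(μ z) ≤ ∏ i, g i x := by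
      intro x
      set S := Finset.univ.filter (fun i => z ∈ A i) with hS
      calc ∫⁻ t, ∏ i, f i (e.symm (t, x)) ∂(μ z)
          = ∫⁻ t, (∏ i ∈ S, f i (e.symm (t, x)))
              * ∏ i ∈ Finset.univ.filter (fun i => ¬ z ∈ A i), f i (e.symm (t₀, x))
              ∂(μ z) := by
            refine lintegral_congr fun t => ?_
            rw [← Finset.prod_filter_mul_prod_filter_not Finset.univ (fun i => z ∈ A i)]
            congr 1
            refine Finset.prod_congr rfl fun i hi => ?_
            exact hconst i (Finset.mem_filter.mp hi).2 t x
        _ = (∫⁻ t, ∏ i ∈ S, f i (e.symm (t, x)) ∂(μ z))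
              * ∏ i ∈ Finset.univ.filter (fun i => ¬ z ∈ A i), f i (e.symm (t₀, x)) := by
            refine lintegral_mul_const _ ?_
            exact Finset.measurable_prod _ fun i _ =>
              (hmeas' i).comp (measurable_id.prodMk measurable_const)
        _ ≤ (∏ i ∈ S, g i x)
              * ∏ i ∈ Finset.univ.filter (fun i => ¬ z ∈ A i), g i x := by
            refine mul_le_mul' ?_ ?_
            · -- Hölder step
              have key : ∫⁻ t, ∏ i ∈ S, (f i (e.symm (t, x)) ^ p i) ^ (p i)⁻¹ ∂(μ z)
                  ≤ ∏ i ∈ S, (∫⁻ t, f i (e.symm (t, x)) ^ p i ∂(μ z)) ^ (p i)⁻¹ := by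
                refine holder_subunit S ?_ (fun i _ => hpinv i) ?_
                · exact fun i _ => (((hmeas' i).comp
                    (measurable_id.prodMk measurable_const)).pow_const (p i)).aemeasurable
                · exact hsum z
              have h1 : ∀ t i, (f i (e.symm (t, x)) ^ p i) ^ (p i)⁻¹
                  = f i (e.symm (t, x)) := fun t i => by
                rw [← ENNReal.rpow_mul, mul_inv_cancel₀ (hp0 i), ENNReal.rpow_one]
              simp_rw [h1] at key
              refine key.trans_eq (Finset.prod_congr rfl fun i hi => ?_)
              simp only [hgdef]
              rw [if_pos ((Finset.mem_filter.mp hi).2 : z ∈ A i), one_div]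
            · refine le_of_eq (Finset.prod_congr rfl fun i hi => ?_)
              simp only [hgdef]
              rw [if_neg ((Finset.mem_filter.mp hi).2 : ¬ z ∈ A i)]
        _ = ∏ i, g i x := Finset.prod_filter_mul_prod_filter_not Finset.univ _ _
    -- now put everything together
    calc ∫⁻ x, ∏ i, f i x ∂(Measure.pi μ)
        = ∫⁻ y, ∏ i, f i (e.symm y) ∂((μ z).prod (Measure.pi ν)) :=
          ((hmp.symm e).lintegral_comp
            (Finset.measurable_prod _ fun i _ => hmeas i)).symm
      _ = ∫⁻ x, ∫⁻ t, ∏ i, f i (e.symm (t, x)) ∂(μ z) ∂(Measure.pi ν) :=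
          lintegral_prod_symm _
            (Finset.measurable_prod _ fun i _ => hmeas' i).aemeasurable
      _ ≤ ∫⁻ x, ∏ i, g i x ∂(Measure.pi ν) := lintegral_mono hholder
      _ ≤ ∏ i, (∫⁻ x, g i x ^ p i ∂(Measure.pi ν)) ^ (1 / p i) :=
          ih Ω' ν B p hp hsum' g hmeasg hdepg
      _ = ∏ i, (∫⁻ x, f i x ^ p i ∂(Measure.pi μ)) ^ (1 / p i) := by
          refine Finset.prod_congr rfl fun i _ => ?_
          rw [hint i]

/-- **generalized Hölder / Finner inequality.** Let `μ₁, …, μ_n` be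
probability measures on `Ω₁, …, Ω_n` and `μ` their product. Let `A₁, …, A_m` be nonempty
subsets of `{1, …, n}` and let exponents `p₁, …, p_m ∈ [1, ∞)` satisfy
`Σ_{i : A_i ∋ j} 1/p_i ≤ 1` for every coordinate `j`. If each `fᵢ` is a nonnegative
measurable function depending only on the coordinates in `Aᵢ` (so that it may be viewed as a
function on `Ω_{A_i}`, and its integral against `μ` equals that against the marginal
`μ_{A_i}`), then `∫ Π |fᵢ| dμ ≤ Π (∫ |fᵢ|^{pᵢ} dμ_{A_i})^{1/pᵢ}`. -/
theorem stmt17 {n m : ℕ} (Ω : Fin n → Type*) [∀ j, MeasurableSpace (Ω j)]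
    (μ : ∀ j, Measure (Ω j)) [∀ j, IsProbabilityMeasure (μ j)]
    (A : Fin m → Finset (Fin n)) (hA : ∀ i, (A i).Nonempty)
    (p : Fin m → ℝ) (hp : ∀ i, 1 ≤ p i)
    (hsum : ∀ j : Fin n, ∑ i ∈ Finset.univ.filter (fun i => j ∈ A i), (p i)⁻¹ ≤ 1)
    (f : Fin m → (∀ j, Ω j) → ℝ≥0∞) (hmeas : ∀ i, Measurable (f i))
    (hdep : ∀ i, ∀ x y : ∀ j, Ω j, (∀ j ∈ A i, x j = y j) → f i x = f i y) :
    ∫⁻ x, ∏ i, f i x ∂(Measure.pi μ)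
      ≤ ∏ i, (∫⁻ x, f i x ^ p i ∂(Measure.pi μ)) ^ (1 / p i) := by
  exact finner_aux n Ω μ A p hp hsum f hmeas hdep
end
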